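/- Let n ≥ 1, let w be a weight on ℝ^n with w ∈ A₂, let Q ⊂ ℝ^n be a cube with sides parallel to the axes, set w_Q = |Q|⁻¹ ∫_Q w dx, and let λ > w_Q. Then w( { x ∈ Q : w(x) > λ } ) ≤ 2^{n+1} λ | { x ∈ Q : w(x) > λ / (2 [w]_{A₂}) } |, where w(E) = ∫_E w dx and |·| denotes Lebesgue measure. -/

import Mathlib

open MeasureTheory ENNReal

noncomputable section

/-- Axis-parallel cube in `ℝⁿ` with lower corner `a` and side length `h`. -/
def Cube (n : ℕ) (a : Fin n → ℝ) (h : ℝ) : Set (Fin n → ℝ) :=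
  {x | ∀ i, a i ≤ x i ∧ x i ≤ a i + h}

/-- `|Q|⁻¹ ∫_Q f`, as an extended nonnegative real (for nonnegative `f`). -/
def setAvg (n : ℕ) (Q : Set (Fin n → ℝ)) (f : (Fin n → ℝ) → ℝ) : ℝ≥0∞ :=
  (volume Q)⁻¹ * ∫⁻ x in Q, ENNReal.ofReal (f x)

/-- `|Q|⁻¹ ∫_Q f`, as a real number. -/
def intAvg (n : ℕ) (Q : Set (Fin n → ℝ)) (f : (Fin n → ℝ) → ℝ) : ℝ :=
  ((volume Q).toReal)⁻¹ * ∫ x in Q, f x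

/-- The `A₂` constant `[w]_{A₂} = sup_Q (|Q|⁻¹∫_Q w)(|Q|⁻¹∫_Q w⁻¹)`. -/
def A2const (n : ℕ) (w : (Fin n → ℝ) → ℝ) : ℝ≥0∞ :=
  ⨆ (a : Fin n → ℝ) (h : ℝ) (_ : 0 < h),
    setAvg n (Cube n a h) w * setAvg n (Cube n a h) (fun x => (w x)⁻¹)

/-- `w` is a weight in the Muckenhoupt class `A₂`. -/
def IsA2 (n : ℕ) (w : (Fin n → ℝ) → ℝ) : Prop :=
  (∀ x, 0 < w x) ∧ LocallyIntegrable w ∧ A2const n w < ⊤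

/-- The `BMO` norm `‖b‖_{BMO} = sup_Q |Q|⁻¹ ∫_Q |b - b_Q|`. -/
def bmoNorm (n : ℕ) (b : (Fin n → ℝ) → ℝ) : ℝ≥0∞ :=
  ⨆ (a : Fin n → ℝ) (h : ℝ) (_ : 0 < h),
    setAvg n (Cube n a h) (fun y => |b y - intAvg n (Cube n a h) b|)

/-- The weighted norm `‖f‖_{L^p(w)} = (∫ |f|^p w)^{1/p}`. -/
def wNorm (n : ℕ) (p : ℝ) (w f : (Fin n → ℝ) → ℝ) : ℝ≥0∞ :=
  (∫⁻ x, (ENNReal.ofReal |f x|) ^ p * ENNReal.ofReal (w x)) ^ (1 / p)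

/-- The commutator `[b,T] f = b · T f - T (b f)`. -/
def commOp {n : ℕ} (b : (Fin n → ℝ) → ℝ)
    (T : ((Fin n → ℝ) → ℝ) → ((Fin n → ℝ) → ℝ)) :
    ((Fin n → ℝ) → ℝ) → ((Fin n → ℝ) → ℝ) :=
  fun f x => b x * T f x - T (fun y => b y * f y) x

/-- Higher order commutators: `T_b^0 = T`, `T_b^k = [b, T_b^{k-1}]`. -/
def commIter {n : ℕ} (b : (Fin n → ℝ) → ℝ)
    (T : ((Fin n → ℝ) → ℝ) → ((Fin n → ℝ) → ℝ)) :
    ℕ → ((Fin n → ℝ) → ℝ) → ((Fin n → ℝ) → ℝ)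
  | 0 => T
  | (k+1) => commOp b (commIter b T k)

/-- `T` is a linear operator on functions. -/
def IsLinearOp (n : ℕ) (T : ((Fin n → ℝ) → ℝ) → ((Fin n → ℝ) → ℝ)) : Prop :=
  (∀ f g, T (f + g) = T f + T g) ∧ (∀ (c : ℝ) (f), T (c • f) = c • T f)


/-!
Calderón–Zygmund stopping time. The maximal dyadic subcubes `Q_j` of `Q` on which the average of
`w` exceeds `λ` cover `{x ∈ Q : w x > λ}` up to a null set (Lebesgue differentiation, using
`w_Q < λ`), and the parent of each `Q_j` has average at most `λ`, so `w(Q_j) ≤ 2ⁿ λ |Q_j|`. With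
`λ' = λ / (2[w]_{A₂})`, the `A₂` condition on `Q_j` gives
`λ |E| / (λ' |Q_j|) ≤ w_{Q_j} (w⁻¹)_{Q_j} ≤ [w]_{A₂}` for `E = {x ∈ Q_j : w x ≤ λ'}`, i.e.
`|E| ≤ |Q_j| / 2`. Hence `w(Q_j) ≤ 2ⁿ⁺¹ λ |{x ∈ Q_j : w x > λ'}|`, and summing over the almost
disjoint `Q_j` gives the estimate.
-/

open Set Filter Topology Metric

section Cubes

variable {n : ℕ}

lemma cube_eq_closedBall (c : Fin n → ℝ) {s : ℝ} (hs : 0 ≤ s) :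
    Cube n c s = closedBall (fun i => c i + s / 2) (s / 2) := by
  ext x
  simp only [Cube, mem_ofPred_eq, mem_closedBall, dist_pi_le_iff (by positivity : 0 ≤ s / 2),
    Real.dist_eq, abs_le]
  refine forall_congr' fun i => ?_
  constructor <;> rintro ⟨h₁, h₂⟩ <;> constructor <;> linarith

lemma volume_cube (c : Fin n → ℝ) {s : ℝ} (hs : 0 ≤ s) :
    volume (Cube n c s) = ENNReal.ofReal s ^ n := by
  rw [cube_eq_closedBall c hs, Real.volume_pi_closedBall _ (by positivity), Fintype.card_fin,
    mul_div_cancel₀ s two_ne_zero, ENNReal.ofReal_pow hs]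

lemma isCompact_cube (c : Fin n → ℝ) {s : ℝ} (hs : 0 ≤ s) : IsCompact (Cube n c s) := by
  rw [cube_eq_closedBall c hs]
  exact isCompact_closedBall _ _

end Cubes

section Dyadic

variable {n : ℕ}

/-- The dyadic subcube of `Cube n a h` of generation `p.1` at position `p.2 ∈ ℕⁿ`; it lies in
`Cube n a h` when `IsDyadicIndex p`. -/
def dyadicCube (a : Fin n → ℝ) (h : ℝ) (p : ℕ × (Fin n → ℕ)) : Set (Fin n → ℝ) :=
  Cube n (fun i => a i + p.2 i * (h / 2 ^ p.1)) (h / 2 ^ p.1)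

def IsDyadicIndex (p : ℕ × (Fin n → ℕ)) : Prop :=
  ∀ i, p.2 i < 2 ^ p.1

def dyadicAncestor (m : ℕ) (p : ℕ × (Fin n → ℕ)) : ℕ × (Fin n → ℕ) :=
  (p.1 - m, fun i => p.2 i / 2 ^ m)

variable {a : Fin n → ℝ} {h : ℝ} {p : ℕ × (Fin n → ℕ)}

@[simp]
lemma dyadicAncestor_zero (p : ℕ × (Fin n → ℕ)) : dyadicAncestor 0 p = p := by
  simp [dyadicAncestor]

lemma dyadicAncestor_dyadicAncestor (m m' : ℕ) (p : ℕ × (Fin n → ℕ)) :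
    dyadicAncestor m (dyadicAncestor m' p) = dyadicAncestor (m' + m) p := by
  simp only [dyadicAncestor, Nat.sub_sub, Nat.div_div_eq_div_mul, pow_add]

lemma IsDyadicIndex.ancestor (hp : IsDyadicIndex p) (m : ℕ) :
    IsDyadicIndex (dyadicAncestor m p) := fun i => by
  rw [dyadicAncestor, Nat.div_lt_iff_lt_mul (by positivity), ← pow_add]
  exact (hp i).trans_le (Nat.pow_le_pow_right two_pos (by omega))

lemma IsDyadicIndex.ancestor_self (hp : IsDyadicIndex p) :
    dyadicAncestor p.1 p = (0, 0) := by
  ext i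
  · simp [dyadicAncestor]
  · exact Nat.div_eq_of_lt (hp i)

lemma IsDyadicIndex.eq_zero_of_fst_eq_zero (hp : IsDyadicIndex p) (h0 : p.1 = 0) : p = (0, 0) := by
  simpa [h0] using hp.ancestor_self

@[simp]
lemma dyadicCube_zero (a : Fin n → ℝ) (h : ℝ) : dyadicCube a h (0, 0) = Cube n a h := by
  simp [dyadicCube]

lemma volume_dyadicCube (hh : 0 ≤ h) (p : ℕ × (Fin n → ℕ)) :
    volume (dyadicCube a h p) = ENNReal.ofReal (h / 2 ^ p.1) ^ n :=
  volume_cube _ (by positivity)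

lemma volume_dyadicCube_ne_zero (hh : 0 < h) (p : ℕ × (Fin n → ℕ)) :
    volume (dyadicCube a h p) ≠ 0 := by
  rw [volume_dyadicCube hh.le]
  exact pow_ne_zero _ (ENNReal.ofReal_pos.2 (by positivity)).ne'

lemma volume_dyadicCube_ne_top (hh : 0 ≤ h) (p : ℕ × (Fin n → ℕ)) :
    volume (dyadicCube a h p) ≠ ⊤ := by
  rw [volume_dyadicCube hh]
  exact ENNReal.pow_ne_top ENNReal.ofReal_ne_top

lemma volume_dyadicAncestor_one (hh : 0 ≤ h) (hp : 0 < p.1) :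
    volume (dyadicCube a h (dyadicAncestor 1 p)) = 2 ^ n * volume (dyadicCube a h p) := by
  obtain ⟨k, j⟩ := p
  obtain ⟨k, rfl⟩ := Nat.exists_eq_add_one_of_ne_zero hp.ne'
  have : h / 2 ^ (k + 1 - 1) = 2 * (h / 2 ^ (k + 1)) := by rw [Nat.add_sub_cancel, pow_succ]; ring
  rw [volume_dyadicCube hh, volume_dyadicCube hh, dyadicAncestor, this,
    ENNReal.ofReal_mul zero_le_two, mul_pow, ENNReal.ofReal_ofNat]

lemma isCompact_dyadicCube (hh : 0 ≤ h) (p : ℕ × (Fin n → ℕ)) :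
    IsCompact (dyadicCube a h p) :=
  isCompact_cube _ (by positivity)

lemma measurableSet_dyadicCube (hh : 0 ≤ h) (p : ℕ × (Fin n → ℕ)) :
    MeasurableSet (dyadicCube a h p) :=
  (isCompact_dyadicCube hh p).measurableSet

lemma dyadicCube_subset_dyadicAncestor (hh : 0 ≤ h) {m : ℕ} (hm : m ≤ p.1) :
    dyadicCube a h p ⊆ dyadicCube a h (dyadicAncestor m p) := by
  obtain ⟨k, j⟩ := p
  intro x hx i
  obtain ⟨hx₁, hx₂⟩ := hx i
  set δ := h / 2 ^ k
  have hδ : 0 ≤ δ := by positivity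
  have hscale : h / 2 ^ (k - m) = 2 ^ m * δ := by
    rw [pow_sub₀ _ two_ne_zero hm]; simp only [δ]; field_simp
  have hlow : ((j i / 2 ^ m : ℕ) : ℝ) * 2 ^ m ≤ j i := by exact_mod_cast Nat.div_mul_le_self _ _
  have hup : (j i : ℝ) + 1 ≤ ((j i / 2 ^ m : ℕ) : ℝ) * 2 ^ m + 2 ^ m := by
    exact_mod_cast Nat.lt_div_mul_add (by positivity)
  simp only [dyadicAncestor, hscale]
  constructor <;> nlinarith

lemma dyadicCube_subset_cube (hh : 0 ≤ h) (hp : IsDyadicIndex p) :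
    dyadicCube a h p ⊆ Cube n a h := by
  simpa [hp.ancestor_self] using dyadicCube_subset_dyadicAncestor (a := a) (p := p) hh le_rfl

lemma volume_dyadicCube_inter_eq_zero (hh : 0 ≤ h) {k : ℕ} {j j' : Fin n → ℕ} (hj : j ≠ j') :
    volume (dyadicCube a h (k, j) ∩ dyadicCube a h (k, j')) = 0 := by
  obtain ⟨i, hi⟩ := Function.ne_iff.1 hj
  set δ := h / 2 ^ k
  have hδ : 0 ≤ δ := by positivity
  refine measure_mono_null (fun x ⟨hx, hx'⟩ => ?_)
    (Measure.pi_hyperplane (fun _ => volume) i (a i + max (j i) (j' i) * δ))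
  obtain ⟨hx₁, hx₂⟩ := hx i
  obtain ⟨hx₁', hx₂'⟩ := hx' i
  simp only [mem_ofPred_eq]
  rcases Nat.lt_or_gt_of_ne hi with hlt | hlt
  · have : (j i : ℝ) + 1 ≤ j' i := by exact_mod_cast hlt
    rw [max_eq_right hlt.le]; nlinarith
  · have : (j' i : ℝ) + 1 ≤ j i := by exact_mod_cast hlt
    rw [max_eq_left hlt.le]; nlinarith

lemma exists_nat_lt_le_le_add_one {t : ℝ} {N : ℕ} (hN : 0 < N) (ht : 0 ≤ t) (htN : t ≤ N) :
    ∃ j < N, (j : ℝ) ≤ t ∧ t ≤ j + 1 := by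
  rcases htN.lt_or_eq with htN | rfl
  · exact ⟨⌊t⌋₊, (Nat.floor_lt ht).2 htN, Nat.floor_le ht, (Nat.lt_floor_add_one t).le⟩
  · refine ⟨N - 1, Nat.sub_lt hN one_pos, ?_, ?_⟩ <;> simp [Nat.cast_pred hN]

lemma exists_mem_dyadicCube (hh : 0 < h) {x : Fin n → ℝ} (hx : x ∈ Cube n a h) (k : ℕ) :
    ∃ j, IsDyadicIndex (k, j) ∧ x ∈ dyadicCube a h (k, j) := by
  set δ := h / 2 ^ k
  have hδ : 0 < δ := by positivity
  have hcoord : ∀ i, ∃ j : ℕ, j < 2 ^ k ∧ (j : ℝ) ≤ (x i - a i) / δ ∧ (x i - a i) / δ ≤ j + 1 := by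
    intro i
    refine exists_nat_lt_le_le_add_one (by positivity)
      (div_nonneg (by linarith [(hx i).1]) hδ.le) ?_
    rw [div_le_iff₀ hδ, Nat.cast_pow, Nat.cast_ofNat, mul_div_cancel₀ _ (by positivity)]
    linarith [(hx i).2]
  choose j hjk hj using hcoord
  refine ⟨j, hjk, fun i => ?_⟩
  have h₁ := (le_div_iff₀ hδ).1 (hj i).1
  have h₂ := (div_le_iff₀ hδ).1 (hj i).2
  constructor <;> dsimp only <;> linarith

end Dyadic

section Maximal

variable {n : ℕ} {a : Fin n → ℝ} {h : ℝ} (P : ℕ × (Fin n → ℕ) → Prop)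

def maximalDyadic : Set (ℕ × (Fin n → ℕ)) :=
  {p | IsDyadicIndex p ∧ P p ∧ ∀ m, 0 < m → m ≤ p.1 → ¬ P (dyadicAncestor m p)}

variable {P}

lemma exists_dyadicAncestor_mem_maximalDyadic {p : ℕ × (Fin n → ℕ)} (hp : IsDyadicIndex p)
    (hP : P p) : ∃ m ≤ p.1, dyadicAncestor m p ∈ maximalDyadic P := by
  classical
  set m₀ := Nat.findGreatest (fun m => P (dyadicAncestor m p)) p.1
  refine ⟨m₀, Nat.findGreatest_le _, hp.ancestor m₀,
    Nat.findGreatest_spec (P := fun m => P (dyadicAncestor m p)) (Nat.zero_le _)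
      (by simpa using hP),
    fun m hm hmp => ?_⟩
  rw [dyadicAncestor_dyadicAncestor]
  simp only [dyadicAncestor] at hmp
  exact Nat.findGreatest_is_greatest (P := fun m => P (dyadicAncestor m p))
    (Nat.lt_add_of_pos_right hm) (by omega)

lemma volume_inter_eq_zero_of_mem_maximalDyadic (hh : 0 ≤ h) {p q : ℕ × (Fin n → ℕ)}
    (hp : p ∈ maximalDyadic P) (hq : q ∈ maximalDyadic P) (hpq : p ≠ q) :
    volume (dyadicCube a h p ∩ dyadicCube a h q) = 0 := by
  wlog hle : p.1 ≤ q.1 generalizing p q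
  · rw [inter_comm]
    exact this hq hp hpq.symm (le_of_not_ge hle)
  obtain ⟨k, j⟩ := p
  set m := q.1 - k
  have hk : dyadicAncestor m q = (k, (dyadicAncestor m q).2) := by
    ext <;> simp only [dyadicAncestor, m] at hle ⊢; omega
  have hj : j ≠ (dyadicAncestor m q).2 := by
    rintro hj
    rcases Nat.eq_zero_or_pos m with hm | hm
    · exact hpq (by rw [hj, ← hk, hm, dyadicAncestor_zero])
    · exact hq.2.2 m hm (Nat.sub_le _ _) (by rw [hk, ← hj]; exact hp.2.1)
  refine measure_mono_null (inter_subset_inter_right _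
    (dyadicCube_subset_dyadicAncestor hh (Nat.sub_le q.1 k))) ?_
  rw [hk]
  exact volume_dyadicCube_inter_eq_zero hh hj

lemma tsum_volume_inter_le_of_maximalDyadic (hh : 0 ≤ h) {T : Set (Fin n → ℝ)}
    (hT : NullMeasurableSet T) :
    ∑' p : maximalDyadic P, volume (dyadicCube a h p ∩ T) ≤ volume T := by
  have hdisj : Pairwise (Function.onFun (AEDisjoint volume)
      fun p : maximalDyadic P => dyadicCube a h p ∩ T) :=
    fun p q hpq => measure_mono_null (inter_subset_inter inter_subset_left inter_subset_left)
      (volume_inter_eq_zero_of_mem_maximalDyadic hh p.2 q.2 (Subtype.coe_injective.ne hpq))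
  rw [← measure_iUnion₀ hdisj fun p => (measurableSet_dyadicCube hh _).nullMeasurableSet.inter hT]
  exact measure_mono (iUnion_subset fun p => inter_subset_right)

lemma fst_pos_and_not_parent_of_mem_maximalDyadic (h0 : ¬ P (0, 0)) {p : ℕ × (Fin n → ℕ)}
    (hp : p ∈ maximalDyadic P) : 0 < p.1 ∧ ¬ P (dyadicAncestor 1 p) := by
  have hpos : 0 < p.1 :=
    Nat.pos_of_ne_zero fun h1 => h0 (hp.1.eq_zero_of_fst_eq_zero h1 ▸ hp.2.1)
  exact ⟨hpos, hp.2.2 1 one_pos hpos⟩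

end Maximal

section Averages

variable {α : Type*} [MeasurableSpace α] {μ : Measure α} {s : Set α}

lemma setLIntegral_ofReal_eq_mul_setAverage {f : α → ℝ} (hf : IntegrableOn f s μ)
    (hf0 : 0 ≤ᵐ[μ.restrict s] f) (hs : μ s ≠ ⊤) :
    ∫⁻ x in s, ENNReal.ofReal (f x) ∂μ = μ s * ENNReal.ofReal (⨍ x in s, f x ∂μ) := by
  rw [← ofReal_integral_eq_lintegral_ofReal hf hf0, ← measure_smul_setAverage f hs, smul_eq_mul,
    ENNReal.ofReal_mul measureReal_nonneg, ofReal_measureReal hs]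

lemma setLIntegral_ofReal_pos {f : α → ℝ} (hf : AEMeasurable f (μ.restrict s))
    (hpos : ∀ x, 0 < f x) (hs : μ s ≠ 0) : 0 < ∫⁻ x in s, ENNReal.ofReal (f x) ∂μ := by
  refine pos_iff_ne_zero.2 fun h0 => hs ?_
  rw [lintegral_eq_zero_iff' hf.ennreal_ofReal] at h0
  simpa [EventuallyEq, (hpos _).not_ge] using h0

end Averages

section A2

variable {n : ℕ} {w : (Fin n → ℝ) → ℝ}

lemma setAvg_mul_setAvg_inv_le_A2const (w : (Fin n → ℝ) → ℝ) (c : Fin n → ℝ) {s : ℝ}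
    (hs : 0 < s) :
    setAvg n (Cube n c s) w * setAvg n (Cube n c s) (fun x => (w x)⁻¹) ≤ A2const n w :=
  le_iSup₂_of_le c s (le_iSup_of_le hs le_rfl)

lemma A2const_pos (hw0 : ∀ x, 0 < w x) (hw : AEMeasurable w) : 0 < A2const n w := by
  have hQ : volume (Cube n 0 1) = 1 := by simp [volume_cube]
  refine lt_of_lt_of_le ?_ (setAvg_mul_setAvg_inv_le_A2const w 0 one_pos)
  simp only [setAvg, hQ, inv_one, one_mul]
  exact ENNReal.mul_pos (setLIntegral_ofReal_pos hw.restrict hw0 (by simp [hQ])).ne'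
    (setLIntegral_ofReal_pos hw.inv.restrict (fun x => inv_pos.2 (hw0 x)) (by simp [hQ])).ne'

variable {D : Set (Fin n → ℝ)} {A : ℝ≥0∞} {lam : ℝ}

lemma volume_le_two_mul_volume_superlevel (hw0 : ∀ x, 0 < w x) (hw : AEMeasurable w)
    (hD : MeasurableSet D) (hD0 : volume D ≠ 0) (hDtop : volume D ≠ ⊤)
    (hA0 : A ≠ 0) (hAtop : A ≠ ⊤) (hDA : setAvg n D w * setAvg n D (fun x => (w x)⁻¹) ≤ A)
    (hlam : 0 < lam) (hDlam : ENNReal.ofReal lam * volume D ≤ ∫⁻ x in D, ENNReal.ofReal (w x)) :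
    volume D ≤ 2 * volume {x ∈ D | lam / (2 * A.toReal) < w x} := by
  set V := volume D
  set lam' := lam / (2 * A.toReal)
  set E := {x ∈ D | w x ≤ lam'}
  have hlam' : 0 < lam' := div_pos hlam (by positivity [ENNReal.toReal_pos hA0 hAtop])
  have hconst : ENNReal.ofReal lam * ENNReal.ofReal lam'⁻¹ = 2 * A := by
    rw [← ENNReal.ofReal_mul hlam.le, inv_div, mul_div_cancel₀ _ hlam.ne',
      ENNReal.ofReal_mul zero_le_two,
      ENNReal.ofReal_ofNat, ENNReal.ofReal_toReal hAtop]
  have hE : ENNReal.ofReal lam'⁻¹ * volume E ≤ ∫⁻ x in D, ENNReal.ofReal (w x)⁻¹ := calc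
    _ = ∫⁻ _ in E, ENNReal.ofReal lam'⁻¹ := (setLIntegral_const _ _).symm
    _ ≤ ∫⁻ x in E, ENNReal.ofReal (w x)⁻¹ := by
      have hE : NullMeasurableSet E :=
        hD.nullMeasurableSet.inter (hw.nullMeasurable measurableSet_Iic)
      refine lintegral_mono_ae ?_
      filter_upwards [ae_restrict_mem₀ hE] with x hx
      exact ENNReal.ofReal_le_ofReal (inv_anti₀ (hw0 x) hx.2)
    _ ≤ _ := lintegral_mono_set fun x hx => hx.1
  have hI : ∀ f : (Fin n → ℝ) → ℝ, ∫⁻ x in D, ENNReal.ofReal (f x) = V * setAvg n D f := fun f => by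
    rw [setAvg, ← mul_assoc, ENNReal.mul_inv_cancel hD0 hDtop, one_mul]
  have hEhalf : 2 * volume E ≤ V := by
    refine (ENNReal.mul_le_mul_iff_right (mul_ne_zero hA0 hD0)
      (ENNReal.mul_ne_top hAtop hDtop)).1 ?_
    calc A * V * (2 * volume E)
        = ENNReal.ofReal lam * ENNReal.ofReal lam'⁻¹ * V * volume E := by rw [hconst]; ring
      _ = ENNReal.ofReal lam * V * (ENNReal.ofReal lam'⁻¹ * volume E) := by ring
      _ ≤ (∫⁻ x in D, ENNReal.ofReal (w x)) * ∫⁻ x in D, ENNReal.ofReal (w x)⁻¹ :=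
        mul_le_mul' hDlam hE
      _ = V * V * (setAvg n D w * setAvg n D fun x => (w x)⁻¹) := by
        rw [hI, hI (fun x => (w x)⁻¹)]; ring
      _ ≤ V * V * A := by gcongr
      _ = A * V * V := by ring
  have hcover : V ≤ volume E + volume {x ∈ D | lam' < w x} :=
    (measure_mono fun x hx => (le_or_gt (w x) lam').imp (⟨hx, ·⟩) (⟨hx, ·⟩)).trans
      (measure_union_le _ _)
  refine ENNReal.le_of_add_le_add_left hDtop ?_
  calc V + V = 2 * V := (two_mul V).symm
    _ ≤ 2 * volume E + 2 * volume {x ∈ D | lam' < w x} := by rw [← mul_add]; gcongr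
    _ ≤ V + 2 * volume {x ∈ D | lam' < w x} := by gcongr

end A2

section CalderonZygmund

variable {n : ℕ} {w : (Fin n → ℝ) → ℝ} {a : Fin n → ℝ} {h lam : ℝ}

lemma ae_le_of_forall_setAverage_dyadicCube_le (hh : 0 < h) (hw : LocallyIntegrable w) (c : ℝ) :
    ∀ᵐ x, x ∈ Cube n a h →
      (∀ p, IsDyadicIndex p → x ∈ dyadicCube a h p → ⨍ y in dyadicCube a h p, w y ≤ c) →
        w x ≤ c := by
  filter_upwards [IsUnifLocDoublingMeasure.ae_tendsto_average volume hw 1] with x hx hxQ hle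
  choose j hj hxj using exists_mem_dyadicCube hh hxQ
  set center : ℕ → Fin n → ℝ := fun k i => a i + j k i * (h / 2 ^ k) + h / 2 ^ k / 2
  have hcube : ∀ k, dyadicCube a h (k, j k) = closedBall (center k) (h / 2 ^ k / 2) :=
    fun k => cube_eq_closedBall _ (by positivity)
  have hδ : Tendsto (fun k : ℕ => h / 2 ^ k / 2) atTop (𝓝[>] 0) := by
    refine tendsto_nhdsWithin_iff.2 ⟨?_, Eventually.of_forall fun k => mem_Ioi.2 (by positivity)⟩
    simpa using ((tendsto_const_nhds (x := h)).div_atTop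
      (tendsto_pow_atTop_atTop_of_one_lt (one_lt_two : (1 : ℝ) < 2))).div_const 2
  refine le_of_tendsto' (hx center _ hδ (Eventually.of_forall fun k => ?_)) fun k => ?_
  · rw [one_mul, ← hcube]
    exact hxj k
  · rw [← hcube]
    exact hle _ (hj k) (hxj k)

def czCubes (w : (Fin n → ℝ) → ℝ) (a : Fin n → ℝ) (h lam : ℝ) : Set (ℕ × (Fin n → ℕ)) :=
  maximalDyadic fun p => lam < ⨍ y in dyadicCube a h p, w y

lemma ae_exists_mem_czCubes_of_lt (hh : 0 < h) (hw : LocallyIntegrable w) :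
    ∀ᵐ x, x ∈ Cube n a h → lam < w x → ∃ p ∈ czCubes w a h lam, x ∈ dyadicCube a h p := by
  filter_upwards [ae_le_of_forall_setAverage_dyadicCube_le hh hw lam] with x hx hxQ hlt
  by_contra! hnot
  refine hlt.not_ge (hx hxQ fun p hp hxp => not_lt.1 fun hP => ?_)
  obtain ⟨m, hm, hmax⟩ := exists_dyadicAncestor_mem_maximalDyadic
    (P := fun q => lam < ⨍ y in dyadicCube a h q, w y) hp hP
  exact hnot _ hmax (dyadicCube_subset_dyadicAncestor hh.le hm hxp)

lemma setLIntegral_superlevel_le_tsum_czCubes (hh : 0 < h) (hw : LocallyIntegrable w) :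
    ∫⁻ x in {x ∈ Cube n a h | lam < w x}, ENNReal.ofReal (w x) ≤
      ∑' p : czCubes w a h lam, ∫⁻ x in dyadicCube a h p, ENNReal.ofReal (w x) :=
  calc _ ≤ ∫⁻ x in ⋃ p : czCubes w a h lam, dyadicCube a h p, ENNReal.ofReal (w x) :=
        lintegral_mono_set' <| (ae_exists_mem_czCubes_of_lt hh hw).mono fun x hx hxS => by
          obtain ⟨p, hp, hxp⟩ := hx hxS.1 hxS.2
          exact mem_iUnion.2 ⟨⟨p, hp⟩, hxp⟩
    _ ≤ _ := lintegral_iUnion_le _ _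

lemma setLIntegral_le_of_mem_czCubes (hh : 0 < h) (hw : LocallyIntegrable w)
    (hw0 : ∀ x, 0 ≤ w x) (hQ : ⨍ x in Cube n a h, w x ≤ lam) {p : ℕ × (Fin n → ℕ)}
    (hp : p ∈ czCubes w a h lam) :
    ∫⁻ x in dyadicCube a h p, ENNReal.ofReal (w x) ≤
      2 ^ n * ENNReal.ofReal lam * volume (dyadicCube a h p) := by
  obtain ⟨hpos, hparent⟩ :=
    fst_pos_and_not_parent_of_mem_maximalDyadic (by simpa using hQ) hp
  set parent := dyadicCube a h (dyadicAncestor 1 p)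
  calc _ ≤ ∫⁻ x in parent, ENNReal.ofReal (w x) :=
        lintegral_mono_set (dyadicCube_subset_dyadicAncestor hh.le hpos)
    _ = volume parent * ENNReal.ofReal (⨍ x in parent, w x) :=
        setLIntegral_ofReal_eq_mul_setAverage
          (hw.integrableOn_isCompact (isCompact_dyadicCube hh.le _))
          (ae_of_all _ hw0) (volume_dyadicCube_ne_top hh.le _)
    _ ≤ volume parent * ENNReal.ofReal lam := by gcongr; exact not_lt.1 hparent
    _ = _ := by rw [volume_dyadicAncestor_one hh.le hpos]; ring

lemma volume_le_two_mul_volume_superlevel_of_mem_czCubes (hh : 0 < h) (hw0 : ∀ x, 0 < w x)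
    (hw : LocallyIntegrable w) (hAtop : A2const n w ≠ ⊤) (hlam : 0 < lam)
    {p : ℕ × (Fin n → ℕ)} (hp : p ∈ czCubes w a h lam) :
    volume (dyadicCube a h p) ≤
      2 * volume {x ∈ dyadicCube a h p | lam / (2 * (A2const n w).toReal) < w x} := by
  have hwm : AEMeasurable w := hw.aestronglyMeasurable.aemeasurable
  refine volume_le_two_mul_volume_superlevel hw0 hwm (measurableSet_dyadicCube hh.le p)
    (volume_dyadicCube_ne_zero hh p) (volume_dyadicCube_ne_top hh.le p) (A2const_pos hw0 hwm).ne'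
    hAtop (setAvg_mul_setAvg_inv_le_A2const w _ (by positivity)) hlam ?_
  rw [setLIntegral_ofReal_eq_mul_setAverage
    (hw.integrableOn_isCompact (isCompact_dyadicCube hh.le p)) (ae_of_all _ fun x => (hw0 x).le)
    (volume_dyadicCube_ne_top hh.le p), mul_comm]
  gcongr
  exact hp.2.1.le

lemma setLIntegral_le_volume_superlevel_of_mem_czCubes (hh : 0 < h) (hw0 : ∀ x, 0 < w x)
    (hw : LocallyIntegrable w) (hAtop : A2const n w ≠ ⊤) (hlam : 0 < lam)
    (hQ : ⨍ x in Cube n a h, w x ≤ lam) {p : ℕ × (Fin n → ℕ)} (hp : p ∈ czCubes w a h lam) :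
    ∫⁻ x in dyadicCube a h p, ENNReal.ofReal (w x) ≤ 2 ^ (n + 1) * ENNReal.ofReal lam *
      volume {x ∈ dyadicCube a h p | lam / (2 * (A2const n w).toReal) < w x} :=
  calc _ ≤ 2 ^ n * ENNReal.ofReal lam * volume (dyadicCube a h p) :=
        setLIntegral_le_of_mem_czCubes hh hw (fun x => (hw0 x).le) hQ hp
    _ ≤ 2 ^ n * ENNReal.ofReal lam *
        (2 * volume {x ∈ dyadicCube a h p | lam / (2 * (A2const n w).toReal) < w x}) := by
      gcongr
      exact volume_le_two_mul_volume_superlevel_of_mem_czCubes hh hw0 hw hAtop hlam hp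
    _ = _ := by ring

end CalderonZygmund

theorem A2_level_set_estimate_general (n : ℕ)
    (w : (Fin n → ℝ) → ℝ) (hw : IsA2 n w)
    (a : Fin n → ℝ) (h : ℝ) (hh : 0 < h)
    (lam : ℝ) (hlam : intAvg n (Cube n a h) w < lam) :
    (∫⁻ x in {x ∈ Cube n a h | lam < w x}, ENNReal.ofReal (w x)) ≤
      ENNReal.ofReal ((2 : ℝ) ^ (n + 1) * lam) *
        volume {x ∈ Cube n a h | lam / (2 * (A2const n w).toReal) < w x} := by
  obtain ⟨hw0, hwloc, hAtop⟩ := hw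
  set S' := {x ∈ Cube n a h | lam / (2 * (A2const n w).toReal) < w x}
  have hQ : ⨍ x in Cube n a h, w x < lam := by rwa [setAverage_eq, smul_eq_mul]
  have hlam0 : 0 < lam := by
    have hvol : volume (Cube n a h) = ENNReal.ofReal h ^ n := volume_cube a hh.le
    obtain ⟨x, -, hx⟩ := exists_le_setAverage (by simp [hvol, hh]) (by simp [hvol])
      (hwloc.integrableOn_isCompact (isCompact_cube a hh.le))
    linarith [hw0 x]
  have hS' : NullMeasurableSet S' := (isCompact_cube a hh.le).measurableSet.nullMeasurableSet.inter
    (hwloc.aestronglyMeasurable.aemeasurable.nullMeasurable measurableSet_Ioi)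
  calc _ ≤ ∑' p : czCubes w a h lam, ∫⁻ x in dyadicCube a h p, ENNReal.ofReal (w x) :=
        setLIntegral_superlevel_le_tsum_czCubes hh hwloc
    _ ≤ ∑' p : czCubes w a h lam,
          2 ^ (n + 1) * ENNReal.ofReal lam * volume (dyadicCube a h p ∩ S') :=
        ENNReal.tsum_le_tsum fun ⟨p, hp⟩ =>
          (setLIntegral_le_volume_superlevel_of_mem_czCubes hh hw0 hwloc hAtop.ne hlam0 hQ.le
            hp).trans (by
              gcongr
              exact fun x hx => ⟨hx.1, dyadicCube_subset_cube hh.le hp.1 hx.1, hx.2⟩)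
    _ ≤ 2 ^ (n + 1) * ENNReal.ofReal lam * volume S' := by
      rw [ENNReal.tsum_mul_left]
      gcongr
      exact tsum_volume_inter_le_of_maximalDyadic hh.le hS'
    _ = _ := by
      rw [ENNReal.ofReal_mul (by positivity), ENNReal.ofReal_pow zero_le_two, ENNReal.ofReal_ofNat]

/-- If `w ∈ A₂`, `Q` is a cube, `w_Q = |Q|⁻¹∫_Q w` and `λ > w_Q`, then
`w({x ∈ Q : w(x) > λ}) ≤ 2^{n+1} λ |{x ∈ Q : w(x) > λ/(2[w]_{A₂})}|`. -/
theorem A2_level_set_estimate (n : ℕ) (hn : 1 ≤ n)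
    (w : (Fin n → ℝ) → ℝ) (hw : IsA2 n w)
    (a : Fin n → ℝ) (h : ℝ) (hh : 0 < h)
    (lam : ℝ) (hlam : intAvg n (Cube n a h) w < lam) :
    (∫⁻ x in {x ∈ Cube n a h | lam < w x}, ENNReal.ofReal (w x)) ≤
      ENNReal.ofReal ((2 : ℝ) ^ (n + 1) * lam) *
        volume {x ∈ Cube n a h | lam / (2 * (A2const n w).toReal) < w x} :=
  A2_level_set_estimate_general n w hw a h hh lam hlam
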